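/- Let h be a nonzero complex number and R = ℂ[x₁,x₄]/(x₁², x₄² − x₁x₄), with x₂ = x₄ − x₁. For an integer k set c_k = (∏_{m=1}^{k} (x₂ + m·h))^{-1} if k ≥ 0 and c_k = ∏_{m=k+1}^{0} (x₂ + m·h) if k < 0. For integers e, d ≥ 0 set a_{e,d} = (∏_{m=1}^{e} (x₁ + m·h))^{-2} · (∏_{m=1}^{d} (x₄ + m·h))^{-1} · c_{d−e} ∈ R, and a_{e,d} = 0 if e < 0 or d < 0. Let J = ∑_{e,d≥0} a_{e,d} r₁^{e} r₂^{d} ∈ R[[r₁,r₂]], and let E₁, E₂ : R[[r₁,r₂]] → R[[r₁,r₂]] be the ℂ-linear operators multiplying the coefficient of r₁^{e} r₂^{d} by (x₁ + e·h) and by (x₄ + d·h) respectively. Then E₁²J = r₁·(E₂J) − r₁·(E₁J); equivalently, for all e ≥ 1 and d ≥ 0, a_{e,d}·(x₁ + eh)² = a_{e−1,d}·((x₄ + dh) − (x₁ + (e−1)h)) = a_{e−1,d}·(x₂ + (d−e+1)h). This is the second quantum differential equation D₂J = 0 of the Hirzebruch surface Σ₁, where D₂ = h²∂₁² − r₁h∂₂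 + r₁h∂₁. -/

import Mathlib

/-- The cohomology ring `H^*(Σ₁;ℂ) = ℂ[x₁,x₄]/(x₁², x₄² − x₁x₄)` of the Hirzebruch
surface `Σ₁ = P(O(0) ⊕ O(−1))`. -/
noncomputable abbrev HirzCohomology : Type :=
  MvPolynomial (Fin 2) ℂ ⧸ Ideal.span
    {(MvPolynomial.X 0 : MvPolynomial (Fin 2) ℂ) ^ 2,
      (MvPolynomial.X 1 : MvPolynomial (Fin 2) ℂ) ^ 2 - MvPolynomial.X 0 * MvPolynomial.X 1}

/-- The degree-two generator `x₁`. -/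
noncomputable abbrev hirzX1 : HirzCohomology :=
  Ideal.Quotient.mk _ (MvPolynomial.X 0)

/-- The degree-two generator `x₄`. -/
noncomputable abbrev hirzX4 : HirzCohomology :=
  Ideal.Quotient.mk _ (MvPolynomial.X 1)

/-- The class `x₂ = x₄ − x₁`. -/
noncomputable abbrev hirzX2 : HirzCohomology := hirzX4 - hirzX1


/-! Since `x₁` and `x₂` are nilpotent, every factor `x + m·h` with `m ≠ 0` is a unit, so
`a_{e,d} / a_{e-1,d} = (x₁ + e·h)⁻² · c_{d-e} / c_{d-e+1}`, and the one-step recursion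
`c_k = c_{k+1} · (x₂ + (k+1)·h)` (valid on both sides of `k = 0`) turns this ratio into
`(x₁ + e·h)⁻² · (x₂ + (d-e+1)·h)`. Multiplication by `r₁` shifts coefficients by one in `e`,
so the power series identity is this recursion read coefficientwise; at `e = 0` both sides
vanish because `x₁² = 0`. -/

theorem IsNilpotent.isUnit_add_algebraMap {K A : Type*} [Field K] [Ring A] [Algebra K A]
    {r : A} (hr : IsNilpotent r) {z : K} (hz : z ≠ 0) : IsUnit (r + algebraMap K A z) :=
  hr.isUnit_add_right_of_commute ((isUnit_iff_ne_zero.mpr hz).map _) (Algebra.commutes z r).symm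

theorem Ring.inverse_mul_sq_mul_sq {M₀ : Type*} [CommMonoidWithZero M₀] (a : M₀) {u : M₀}
    (hu : IsUnit u) : Ring.inverse (a * u) ^ 2 * u ^ 2 = Ring.inverse a ^ 2 := by
  rw [← mul_pow, Ring.mul_inverse_rev, mul_comm (Ring.inverse u),
    Ring.inverse_mul_cancel_right _ _ hu]

theorem eq_mul_apply_add_one_of_inverse_prod_Icc {M₀ : Type*} [CommMonoidWithZero M₀]
    {f : ℤ → M₀} (hf : ∀ m, 0 < m → IsUnit (f m)) {c : ℤ → M₀}
    (hc₁ : ∀ k, 0 ≤ k → c k = Ring.inverse (∏ m ∈ Finset.Icc 1 k, f m))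
    (hc₂ : ∀ k, k < 0 → c k = ∏ m ∈ Finset.Icc (k + 1) 0, f m) (k : ℤ) :
    c k = c (k + 1) * f (k + 1) := by
  rcases lt_trichotomy k (-1) with hk | rfl | hk
  · rw [hc₂ k (by omega), hc₂ (k + 1) (by omega),
      ← Finset.insert_Icc_add_one_left_eq_Icc (by omega), Finset.prod_insert (by simp), mul_comm]
  · rw [hc₂ _ (by norm_num), show (-1 : ℤ) + 1 = 0 by norm_num, hc₁ _ le_rfl]
    simp
  · rw [hc₁ k (by omega), hc₁ (k + 1) (by omega),
      ← Finset.insert_Icc_right_eq_Icc_add_one (by omega), Finset.prod_insert (by simp),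
      Ring.mul_inverse_rev, Ring.inverse_mul_cancel_right _ _ (hf _ (by omega))]

namespace MvPowerSeries

variable {σ R : Type*} [Semiring R]

theorem coeff_single_add_X_mul (i : σ) (t : σ →₀ ℕ) (F : MvPowerSeries σ R) :
    coeff (Finsupp.single i 1 + t) (X i * F) = coeff t F := by
  rw [X_def, coeff_add_monomial_mul, one_mul]

theorem coeff_X_mul_of_apply_eq_zero {s : σ →₀ ℕ} {i : σ} (hs : s i = 0)
    (F : MvPowerSeries σ R) : coeff s (X i * F) = 0 := by
  rw [X_def, coeff_monomial_mul, if_neg]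
  simp [Finsupp.single_le_iff, hs]

end MvPowerSeries

namespace HirzCohomology

theorem hirzX1_sq : hirzX1 ^ 2 = 0 := by
  rw [← map_pow, Ideal.Quotient.eq_zero_iff_mem]
  exact Ideal.subset_span (Set.mem_insert _ _)

theorem hirzX4_sq : hirzX4 ^ 2 = hirzX1 * hirzX4 := by
  rw [← sub_eq_zero, ← map_pow, ← map_mul, ← map_sub, Ideal.Quotient.eq_zero_iff_mem]
  exact Ideal.subset_span (Set.mem_insert_iff.mpr (Or.inr rfl))

theorem isNilpotent_hirzX1 : IsNilpotent hirzX1 := ⟨2, hirzX1_sq⟩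

theorem isNilpotent_hirzX4 : IsNilpotent hirzX4 :=
  ⟨3, by rw [pow_succ, hirzX4_sq, mul_assoc, ← sq, hirzX4_sq, ← mul_assoc, ← sq, hirzX1_sq,
    zero_mul]⟩

theorem isNilpotent_hirzX2 : IsNilpotent hirzX2 :=
  (Commute.all _ _).isNilpotent_sub isNilpotent_hirzX4 isNilpotent_hirzX1

theorem coeff_succ_mul_sq {h : ℂ} (hh : h ≠ 0) {c : ℤ → HirzCohomology}
    (hc : ∀ k : ℤ,
      c k = c (k + 1) * (hirzX2 + algebraMap ℂ HirzCohomology (((k + 1 : ℤ) : ℂ) * h)))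
    {A : ℤ → ℤ → HirzCohomology}
    (hA : ∀ e d : ℕ, A e d =
      Ring.inverse (∏ k ∈ Finset.range e,
          (hirzX1 + algebraMap ℂ HirzCohomology (((k : ℂ) + 1) * h))) ^ 2 *
        Ring.inverse (∏ k ∈ Finset.range d,
          (hirzX4 + algebraMap ℂ HirzCohomology (((k : ℂ) + 1) * h))) *
        c ((d : ℤ) - (e : ℤ)))
    (m d : ℕ) :
    A (m + 1) d * (hirzX1 + algebraMap ℂ HirzCohomology (((m : ℂ) + 1) * h)) ^ 2 =
      A m d * (hirzX2 + algebraMap ℂ HirzCohomology (((d : ℂ) - m) * h)) := by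
  have hu : IsUnit (hirzX1 + algebraMap ℂ HirzCohomology (((m : ℂ) + 1) * h)) :=
    isNilpotent_hirzX1.isUnit_add_algebraMap (mul_ne_zero (Nat.cast_add_one_ne_zero m) hh)
  have hc' : c (d - (m + 1)) =
      c (d - m) * (hirzX2 + algebraMap ℂ HirzCohomology (((d : ℂ) - m) * h)) := by
    convert hc (d - (m + 1)) using 3 <;> push_cast <;> ring
  rw [← Nat.cast_succ, hA, hA, Finset.prod_range_succ, Nat.cast_succ, hc']
  rw [mul_right_comm, mul_right_comm (Ring.inverse _ ^ 2), Ring.inverse_mul_sq_mul_sq _ hu]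
  ring

theorem E1_E1_eq_of_coeff_succ_mul_sq {h : ℂ} {A : ℤ → ℤ → HirzCohomology}
    (hrec : ∀ m d : ℕ,
      A (m + 1) d * (hirzX1 + algebraMap ℂ HirzCohomology (((m : ℂ) + 1) * h)) ^ 2 =
        A m d * (hirzX2 + algebraMap ℂ HirzCohomology (((d : ℂ) - m) * h)))
    {J : MvPowerSeries (Fin 2) HirzCohomology}
    (hJ : ∀ s : Fin 2 →₀ ℕ, MvPowerSeries.coeff s J = A (s 0) (s 1))
    {E1 E2 : MvPowerSeries (Fin 2) HirzCohomology → MvPowerSeries (Fin 2) HirzCohomology}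
    (hE1 : ∀ F s, MvPowerSeries.coeff s (E1 F) =
      (hirzX1 + algebraMap ℂ HirzCohomology ((s 0 : ℂ) * h)) * MvPowerSeries.coeff s F)
    (hE2 : ∀ F s, MvPowerSeries.coeff s (E2 F) =
      (hirzX4 + algebraMap ℂ HirzCohomology ((s 1 : ℂ) * h)) * MvPowerSeries.coeff s F) :
    E1 (E1 J) = MvPowerSeries.X 0 * E2 J - MvPowerSeries.X 0 * E1 J := by
  ext s
  rw [map_sub, hE1, hE1, hJ]
  obtain hs | ⟨t, rfl⟩ : s 0 = 0 ∨ ∃ t, s = Finsupp.single 0 1 + t := by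
    rcases Nat.eq_zero_or_pos (s 0) with hs | hs
    · exact .inl hs
    · exact .inr ⟨s - Finsupp.single 0 1,
        (add_tsub_cancel_of_le (Finsupp.single_le_iff.mpr hs)).symm⟩
  · rw [MvPowerSeries.coeff_X_mul_of_apply_eq_zero hs,
      MvPowerSeries.coeff_X_mul_of_apply_eq_zero hs, hs, Nat.cast_zero, zero_mul, map_zero,
      add_zero, ← mul_assoc, ← sq, hirzX1_sq, zero_mul, sub_self]
  · rw [MvPowerSeries.coeff_single_add_X_mul, MvPowerSeries.coeff_single_add_X_mul, hE1, hE2, hJ]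
    have ht0 : (Finsupp.single 0 1 + t : Fin 2 →₀ ℕ) 0 = t 0 + 1 := by simp [add_comm]
    have ht1 : (Finsupp.single 0 1 + t : Fin 2 →₀ ℕ) 1 = t 1 := by simp
    simp only [hirzX2, map_add, map_sub, map_mul, map_natCast, map_one] at hrec
    simp only [ht0, ht1, Nat.cast_succ, map_add, map_mul, map_natCast, map_one]
    linear_combination hrec (t 0) (t 1)

end HirzCohomology

theorem stmt_11_general (h : ℂ) (hh : h ≠ 0)
    -- the factors `c_k`
    (c : ℤ → HirzCohomology)
    (hc1 : ∀ k : ℤ, 0 ≤ k → c k =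
      Ring.inverse (∏ m ∈ Finset.Icc (1 : ℤ) k,
        (hirzX2 + algebraMap ℂ HirzCohomology ((m : ℂ) * h))))
    (hc2 : ∀ k : ℤ, k < 0 → c k =
      ∏ m ∈ Finset.Icc (k + 1) (0 : ℤ),
        (hirzX2 + algebraMap ℂ HirzCohomology ((m : ℂ) * h)))
    -- the coefficients `a_{e,d}`, extended by zero to negative indices
    (A : ℤ → ℤ → HirzCohomology)
    (hA : ∀ e d : ℕ, A e d =
      Ring.inverse (∏ k ∈ Finset.range e,
          (hirzX1 + algebraMap ℂ HirzCohomology (((k : ℂ) + 1) * h))) ^ 2 *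
        Ring.inverse (∏ k ∈ Finset.range d,
          (hirzX4 + algebraMap ℂ HirzCohomology (((k : ℂ) + 1) * h))) *
        c ((d : ℤ) - (e : ℤ)))
    -- `J = ∑ a_{e,d} r₁^{e} r₂^{d}`
    (J : MvPowerSeries (Fin 2) HirzCohomology)
    (hJ : ∀ s : Fin 2 →₀ ℕ, MvPowerSeries.coeff s J = A (s 0) (s 1))
    -- the operators `E₁`, `E₂` multiplying the coefficient of `r₁^{e} r₂^{d}`
    -- by `x₁ + e·h` and `x₄ + d·h` respectively
    (E1 E2 : MvPowerSeries (Fin 2) HirzCohomology → MvPowerSeries (Fin 2) HirzCohomology)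
    (hE1 : ∀ F s, MvPowerSeries.coeff s (E1 F) =
      (hirzX1 + algebraMap ℂ HirzCohomology ((s 0 : ℂ) * h)) *
        MvPowerSeries.coeff s F)
    (hE2 : ∀ F s, MvPowerSeries.coeff s (E2 F) =
      (hirzX4 + algebraMap ℂ HirzCohomology ((s 1 : ℂ) * h)) *
        MvPowerSeries.coeff s F) :
    -- `E₁² J = r₁ (E₂ J) − r₁ (E₁ J)`
    E1 (E1 J) = MvPowerSeries.X 0 * E2 J - MvPowerSeries.X 0 * E1 J ∧
    -- equivalently, the coefficient recursion
    ∀ e d : ℤ, 1 ≤ e → 0 ≤ d →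
      A e d * (hirzX1 + algebraMap ℂ HirzCohomology ((e : ℂ) * h)) ^ 2
        = A (e - 1) d *
            ((hirzX4 + algebraMap ℂ HirzCohomology ((d : ℂ) * h))
              - (hirzX1 + algebraMap ℂ HirzCohomology (((e : ℂ) - 1) * h))) ∧
      A (e - 1) d *
          ((hirzX4 + algebraMap ℂ HirzCohomology ((d : ℂ) * h))
            - (hirzX1 + algebraMap ℂ HirzCohomology (((e : ℂ) - 1) * h)))
        = A (e - 1) d *
            (hirzX2 + algebraMap ℂ HirzCohomology (((d : ℂ) - (e : ℂ) + 1) * h)) := by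
  have hc : ∀ k : ℤ,
      c k = c (k + 1) * (hirzX2 + algebraMap ℂ HirzCohomology (((k + 1 : ℤ) : ℂ) * h)) :=
    eq_mul_apply_add_one_of_inverse_prod_Icc (fun m hm =>
      HirzCohomology.isNilpotent_hirzX2.isUnit_add_algebraMap
        (mul_ne_zero (Int.cast_ne_zero.mpr hm.ne') hh)) hc1 hc2
  have hrec := HirzCohomology.coeff_succ_mul_sq hh hc hA
  refine ⟨HirzCohomology.E1_E1_eq_of_coeff_succ_mul_sq hrec hJ hE1 hE2, fun e d he hd => ?_⟩
  lift d to ℕ using hd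
  obtain ⟨m, rfl⟩ : ∃ m : ℕ, e = m + 1 := ⟨(e - 1).toNat, by omega⟩
  simp only [hirzX2, map_add, map_sub, map_mul, map_natCast, map_one] at hrec
  simp only [Int.cast_add, Int.cast_natCast, Int.cast_one, add_sub_cancel_right, hirzX2,
    map_add, map_sub, map_mul, map_natCast, map_one]
  exact ⟨by linear_combination hrec m d, by ring⟩

theorem stmt_11 (h : ℂ) (hh : h ≠ 0)
    -- the factors `c_k`
    (c : ℤ → HirzCohomology)
    (hc1 : ∀ k : ℤ, 0 ≤ k → c k =
      Ring.inverse (∏ m ∈ Finset.Icc (1 : ℤ) k,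
        (hirzX2 + algebraMap ℂ HirzCohomology ((m : ℂ) * h))))
    (hc2 : ∀ k : ℤ, k < 0 → c k =
      ∏ m ∈ Finset.Icc (k + 1) (0 : ℤ),
        (hirzX2 + algebraMap ℂ HirzCohomology ((m : ℂ) * h)))
    -- the coefficients `a_{e,d}`, extended by zero to negative indices
    (A : ℤ → ℤ → HirzCohomology)
    (hA : ∀ e d : ℕ, A e d =
      Ring.inverse (∏ k ∈ Finset.range e,
          (hirzX1 + algebraMap ℂ HirzCohomology (((k : ℂ) + 1) * h))) ^ 2 *
        Ring.inverse (∏ k ∈ Finset.range d,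
          (hirzX4 + algebraMap ℂ HirzCohomology (((k : ℂ) + 1) * h))) *
        c ((d : ℤ) - (e : ℤ)))
    (hA0 : ∀ e d : ℤ, e < 0 ∨ d < 0 → A e d = 0)
    -- `J = ∑ a_{e,d} r₁^{e} r₂^{d}`
    (J : MvPowerSeries (Fin 2) HirzCohomology)
    (hJ : ∀ s : Fin 2 →₀ ℕ, MvPowerSeries.coeff s J = A (s 0) (s 1))
    -- the operators `E₁`, `E₂` multiplying the coefficient of `r₁^{e} r₂^{d}`
    -- by `x₁ + e·h` and `x₄ + d·h` respectively
    (E1 E2 : MvPowerSeries (Fin 2) HirzCohomology → MvPowerSeries (Fin 2) HirzCohomology)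
    (hE1 : ∀ F s, MvPowerSeries.coeff s (E1 F) =
      (hirzX1 + algebraMap ℂ HirzCohomology ((s 0 : ℂ) * h)) *
        MvPowerSeries.coeff s F)
    (hE2 : ∀ F s, MvPowerSeries.coeff s (E2 F) =
      (hirzX4 + algebraMap ℂ HirzCohomology ((s 1 : ℂ) * h)) *
        MvPowerSeries.coeff s F) :
    -- `E₁² J = r₁ (E₂ J) − r₁ (E₁ J)`
    E1 (E1 J) = MvPowerSeries.X 0 * E2 J - MvPowerSeries.X 0 * E1 J ∧
    -- equivalently, the coefficient recursion
    ∀ e d : ℤ, 1 ≤ e → 0 ≤ d →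
      A e d * (hirzX1 + algebraMap ℂ HirzCohomology ((e : ℂ) * h)) ^ 2
        = A (e - 1) d *
            ((hirzX4 + algebraMap ℂ HirzCohomology ((d : ℂ) * h))
              - (hirzX1 + algebraMap ℂ HirzCohomology (((e : ℂ) - 1) * h))) ∧
      A (e - 1) d *
          ((hirzX4 + algebraMap ℂ HirzCohomology ((d : ℂ) * h))
            - (hirzX1 + algebraMap ℂ HirzCohomology (((e : ℂ) - 1) * h)))
        = A (e - 1) d *
            (hirzX2 + algebraMap ℂ HirzCohomology (((d : ℂ) - (e : ℂ) + 1) * h)) :=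
  stmt_11_general h hh c hc1 hc2 A hA J hJ E1 E2 hE1 hE2
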